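/- Let a,b>0, p>6, λ>0, h≥0 a potential. For every u∈M_λ and every pair (s,t)∈(0,∞)×(0,∞) with (s,t)≠(1,1), one has J_λ(u)>J_λ(su⁺+tu⁻). -/

import Mathlib

open scoped BigOperators
open Filter

namespace DiscreteKirchhoff

/-- Vertices of the lattice graph ℤ³. -/
abbrev V := Fin 3 → ℤ

/-- Adjacency on ℤ³: x ∼ y iff ∑ᵢ |xᵢ - yᵢ| = 1. -/
def adj (x y : V) : Prop := (∑ i, |x i - y i|) = 1

instance (x y : V) : Decidable (adj x y) :=
  inferInstanceAs (Decidable ((∑ i, |x i - y i|) = 1))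

/-- Graph Laplacian: Δu(x) = ∑_{y∼x} (u(y) - u(x)). -/
noncomputable def lap (u : V → ℝ) (x : V) : ℝ :=
  ∑' y : V, if adj x y then u y - u x else 0

/-- Gradient form: ∇u∇v(x) = (1/2) ∑_{y∼x} (u(y)-u(x))(v(y)-v(x)). -/
noncomputable def gradForm (u v : V → ℝ) (x : V) : ℝ :=
  (1/2) * ∑' y : V, if adj x y then (u y - u x) * (v y - v x) else 0

/-- |∇u|²(x). -/
noncomputable def gradSq (u : V → ℝ) (x : V) : ℝ := gradForm u u x

/-- Positive part u⁺ = max(u,0). -/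
noncomputable def pos (u : V → ℝ) : V → ℝ := fun x => max (u x) 0

/-- Negative part u⁻ = min(u,0). -/
noncomputable def neg (u : V → ℝ) : V → ℝ := fun x => min (u x) 0

/-- K_V(u) = ∑_x ∑_{y∼x} [u⁺(x)u⁻(y) + u⁻(x)u⁺(y)]. -/
noncomputable def KV (u : V → ℝ) : ℝ :=
  ∑' x : V, ∑' y : V, if adj x y then pos u x * neg u y + neg u x * pos u y else 0

/-- |t|^p log t², taken to be 0 at t = 0. -/
noncomputable def logTerm (p t : ℝ) : ℝ :=
  if t = 0 then 0 else |t| ^ p * Real.log (t ^ 2)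

/-- |t|^{p-2} t log t², taken to be 0 at t = 0. -/
noncomputable def nlTerm (p t : ℝ) : ℝ :=
  if t = 0 then 0 else |t| ^ (p - 2) * t * Real.log (t ^ 2)

/-- Membership in the space ℋ_λ (independent of λ > 0). -/
def memH (h u : V → ℝ) : Prop :=
  Summable (fun x => gradSq u x + (u x) ^ 2) ∧ Summable (fun x => h x * (u x) ^ 2)

/-- h_λ(x) = λ h(x) + 1. -/
noncomputable def hl (lam : ℝ) (h : V → ℝ) (x : V) : ℝ := lam * h x + 1

/-- Squared norm in ℋ_λ. -/
noncomputable def normHlamSq (a lam : ℝ) (h u : V → ℝ) : ℝ :=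
  ∑' x : V, (a * gradSq u x + hl lam h x * (u x) ^ 2)

/-- Squared H¹ norm. -/
noncomputable def normH1Sq (u : V → ℝ) : ℝ :=
  ∑' x : V, (gradSq u x + (u x) ^ 2)

/-- Inner product in ℋ_λ. -/
noncomputable def innerHlam (a lam : ℝ) (h u v : V → ℝ) : ℝ :=
  ∑' x : V, (a * gradForm u v x + hl lam h x * u x * v x)

/-- The energy functional J_λ. -/
noncomputable def Jlam (a b p lam : ℝ) (h u : V → ℝ) : ℝ :=
  (1/2) * normHlamSq a lam h u
  + (b/4) * (∑' x : V, gradSq u x) ^ 2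
  + (2/p^2) * ∑' x : V, |u x| ^ p
  - (1/p) * ∑' x : V, logTerm p (u x)

/-- The pairing (J′_λ(u), φ). -/
noncomputable def Jp (a b p lam : ℝ) (h u φ : V → ℝ) : ℝ :=
  (∑' x : V, (a * gradForm u φ x + hl lam h x * u x * φ x))
  + b * (∑' x : V, gradSq u x) * (∑' x : V, gradForm u φ x)
  - ∑' x : V, nlTerm p (u x) * φ x

/-- The Nehari manifold N_λ. -/
def NSet (a b p lam : ℝ) (h : V → ℝ) : Set (V → ℝ) :=
  {u | memH h u ∧ u ≠ 0 ∧ Jp a b p lam h u u = 0}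

/-- The sign-changing Nehari set M_λ. -/
def MSet (a b p lam : ℝ) (h : V → ℝ) : Set (V → ℝ) :=
  {u | memH h u ∧ pos u ≠ 0 ∧ neg u ≠ 0 ∧
       Jp a b p lam h u (pos u) = 0 ∧ Jp a b p lam h u (neg u) = 0}

/-- c_λ = inf_{N_λ} J_λ. -/
noncomputable def cLam (a b p lam : ℝ) (h : V → ℝ) : ℝ :=
  sInf (Jlam a b p lam h '' NSet a b p lam h)

/-- m_λ = inf_{M_λ} J_λ. -/
noncomputable def mLam (a b p lam : ℝ) (h : V → ℝ) : ℝ :=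
  sInf (Jlam a b p lam h '' MSet a b p lam h)

/-- Graph-connectedness of a subset of ℤ³. -/
def connectedIn (S : Set V) : Prop :=
  ∀ x ∈ S, ∀ y ∈ S, Relation.ReflTransGen (fun z w => adj z w ∧ w ∈ S) x y

/-- Hypothesis (h₁): h ≥ 0 and Ω = {h = 0} is nonempty, connected and finite. -/
def hypH1 (h : V → ℝ) : Prop :=
  (∀ x, 0 ≤ h x) ∧ {x | h x = 0}.Nonempty ∧ connectedIn {x | h x = 0} ∧ {x | h x = 0}.Finite

/-- Hypothesis (h₂): the sublevel set {h < M} is finite for some M > 0. -/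
def hypH2 (h : V → ℝ) : Prop :=
  ∃ M > 0, {x | h x < M}.Finite

/-- u solves the discrete logarithmic Kirchhoff equation pointwise on ℤ³. -/
def solvesEq (a b p lam : ℝ) (h u : V → ℝ) : Prop :=
  ∀ x : V, -(a + b * ∑' y : V, gradSq u y) * lap u x + hl lam h x * u x = nlTerm p (u x)

/-- Vertex boundary of a subset of ℤ³. -/
def bdry (S : Set V) : Set V := {y | y ∉ S ∧ ∃ x ∈ S, adj x y}

/-- ℋ¹₀(Ω): functions vanishing outside Ω. -/
def H10 (S : Set V) : Set (V → ℝ) := {u | ∀ x, x ∉ S → u x = 0}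

/-- The energy functional J_Ω. -/
noncomputable def JOm (a b p : ℝ) (S : Set V) (u : V → ℝ) : ℝ :=
  (1/2) * ∑' x : V, (S ∪ bdry S).indicator (fun x => a * gradSq u x) x
  + (1/2) * ∑' x : V, S.indicator (fun x => (u x) ^ 2) x
  + (b/4) * (∑' x : V, (S ∪ bdry S).indicator (gradSq u) x) ^ 2
  + (2/p^2) * ∑' x : V, S.indicator (fun x => |u x| ^ p) x
  - (1/p) * ∑' x : V, S.indicator (fun x => logTerm p (u x)) x

/-- The pairing (J′_Ω(u), φ). -/
noncomputable def JOmp (a b p : ℝ) (S : Set V) (u φ : V → ℝ) : ℝ :=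
  (∑' x : V, (S ∪ bdry S).indicator (fun x => a * gradForm u φ x) x)
  + (∑' x : V, S.indicator (fun x => u x * φ x) x)
  + b * (∑' x : V, (S ∪ bdry S).indicator (gradSq u) x)
      * (∑' x : V, (S ∪ bdry S).indicator (gradForm u φ) x)
  - ∑' x : V, S.indicator (fun x => nlTerm p (u x) * φ x) x

/-- The Nehari manifold N_Ω. -/
def NOm (a b p : ℝ) (S : Set V) : Set (V → ℝ) :=
  {u | u ∈ H10 S ∧ u ≠ 0 ∧ JOmp a b p S u u = 0}

/-- The sign-changing Nehari set M_Ω. -/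
def MOm (a b p : ℝ) (S : Set V) : Set (V → ℝ) :=
  {u | u ∈ H10 S ∧ pos u ≠ 0 ∧ neg u ≠ 0 ∧
       JOmp a b p S u (pos u) = 0 ∧ JOmp a b p S u (neg u) = 0}

/-- c_Ω. -/
noncomputable def cOm (a b p : ℝ) (S : Set V) : ℝ :=
  sInf (JOm a b p S '' NOm a b p S)

/-- m_Ω. -/
noncomputable def mOm (a b p : ℝ) (S : Set V) : ℝ :=
  sInf (JOm a b p S '' MOm a b p S)

/-- u solves the limiting equation pointwise on Ω. -/
def solvesEqOm (a b p : ℝ) (S : Set V) (u : V → ℝ) : Prop :=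
  ∀ x ∈ S, -(a + b * ∑' y : V, (S ∪ bdry S).indicator (gradSq u) y) * lap u x + u x
      = nlTerm p (u x)


end DiscreteKirchhoff

/-!
Write `u = u⁺ + u⁻`. As `u⁺ u⁻ = 0` pointwise, `J_λ(s u⁺ + t u⁻)` is an explicit function of
`(s, t)` and nine numbers attached to `u⁺, u⁻`: their `ℋ_λ`-norms, Dirichlet energies and cross
term `∑ ∇u⁺∇u⁻ ≥ 0`, and the sums `∑ |u^±|^p` and `∑ |u^±|^p log (u^±)²`. Eliminating the
logarithmic sums by the two Nehari identities `(J′_λ(u), u^±) = 0`, the difference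
`J_λ(u) - J_λ(s u⁺ + t u⁻)` splits into nonnegative terms: the quadratic ones by Bernoulli's
inequality (`s²/2 - s^p/p ≤ 1/2 - 1/p`), the Kirchhoff one by Jensen's inequality for
`x ↦ x^(p/2)` followed by Bernoulli, and the logarithmic ones, `∑ |u^±|^p (1 - x + x log x)` with
`x = s^p` or `t^p`, because `1 - x + x log x > 0` for `x ≠ 1`.
-/

lemma Summable.abs_rpow_of_sq {ι : Type*} {f : ι → ℝ} {q : ℝ} (hf : Summable fun i => f i ^ 2)
    (hq : 2 ≤ q) : Summable fun i => |f i| ^ q := by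
  have h2 : Memℓp f 2 := (memℓp_gen_iff (by norm_num)).2 (by simpa using hf)
  have hq' : (0 : ℝ) < (ENNReal.ofReal q).toReal := by
    rw [ENNReal.toReal_ofReal (by linarith)]; linarith
  have := (memℓp_gen_iff hq').1 (h2.of_exponent_ge (by
    rw [show (2 : ENNReal) = ENNReal.ofReal 2 by simp]; exact ENNReal.ofReal_le_ofReal hq))
  simpa [ENNReal.toReal_ofReal (by linarith : 0 ≤ q)] using this

lemma tsum_abs_rpow_pos {ι : Type*} {f : ι → ℝ} {p : ℝ} (hf : Summable fun i => |f i| ^ p)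
    (hne : f ≠ 0) : 0 < ∑' i, |f i| ^ p := by
  obtain ⟨i, hi⟩ := Function.ne_iff.1 hne
  exact hf.tsum_pos (fun _ => by positivity) i (Real.rpow_pos_of_pos (abs_pos.2 hi) p)

lemma abs_log_le_add_inv {x : ℝ} (hx : 0 ≤ x) : |Real.log x| ≤ x + x⁻¹ :=
  abs_le.2 ⟨by linarith [Real.neg_inv_le_log hx, inv_nonneg.2 hx],
    by linarith [Real.log_le_self hx, inv_nonneg.2 hx]⟩

lemma one_add_mul_sq_sub_one_le_rpow {r y : ℝ} (hr : 1 ≤ r) (hy : 0 ≤ y) :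
    1 + r * (y ^ 2 - 1) ≤ y ^ (2 * r) := by
  have := one_add_mul_self_le_rpow_one_add (by nlinarith : -1 ≤ y ^ 2 - 1) hr
  rwa [add_sub_cancel, ← Real.rpow_natCast_mul hy, Nat.cast_ofNat] at this

lemma sq_div_two_sub_rpow_div_le {p s : ℝ} (hp : 2 ≤ p) (hs : 0 ≤ s) :
    s ^ 2 / 2 - s ^ p / p ≤ 1 / 2 - 1 / p := by
  have hbern := one_add_mul_sq_sub_one_le_rpow (r := p / 2) (by linarith) hs
  rw [mul_div_cancel₀ _ two_ne_zero] at hbern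
  rw [← sub_nonneg]
  have : 1 / 2 - 1 / p - (s ^ 2 / 2 - s ^ p / p) = (s ^ p - (1 + p / 2 * (s ^ 2 - 1))) / p := by
    field_simp; ring
  rw [this]
  exact div_nonneg (by linarith) (by linarith)

-- Jensen for `x ↦ x ^ (p / 2)` on the weighted mean of `s ^ 2, t ^ 2`, then Bernoulli.
lemma sq_sub_sq_le_mul_weighted_rpow {p α β s t : ℝ} (hp : 4 ≤ p) (hα : 0 ≤ α) (hβ : 0 ≤ β)
    (hs : 0 ≤ s) (ht : 0 ≤ t) :
    p / 4 * ((α * s ^ 2 + β * t ^ 2) ^ 2 - (α + β) ^ 2)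
      ≤ (α + β) * (α * s ^ p + β * t ^ p - (α + β)) := by
  rcases (add_nonneg hα hβ).eq_or_lt with hB | hB
  · obtain ⟨rfl, rfl⟩ : α = 0 ∧ β = 0 := ⟨by linarith, by linarith⟩
    simp
  set B := α + β
  have hjensen : ((α * s ^ 2 + β * t ^ 2) / B) ^ (p / 2) ≤ (α * s ^ p + β * t ^ p) / B := by
    have := (convexOn_rpow (by linarith : 1 ≤ p / 2)).2 (sq_nonneg s) (sq_nonneg t)
      (div_nonneg hα hB.le) (div_nonneg hβ hB.le) (by rw [← add_div, div_self hB.ne'])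
    simp only [smul_eq_mul, ← Real.rpow_natCast_mul hs, ← Real.rpow_natCast_mul ht,
      Nat.cast_ofNat, mul_div_cancel₀ _ (two_ne_zero' ℝ)] at this
    rwa [show (α * s ^ 2 + β * t ^ 2) / B = α / B * s ^ 2 + β / B * t ^ 2 by ring,
      show (α * s ^ p + β * t ^ p) / B = α / B * s ^ p + β / B * t ^ p by ring]
  have hbern := one_add_mul_sq_sub_one_le_rpow (r := p / 4) (by linarith)
    (div_nonneg (by positivity) hB.le : 0 ≤ (α * s ^ 2 + β * t ^ 2) / B)
  rw [show 2 * (p / 4) = p / 2 by ring] at hbern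
  have key := mul_le_mul_of_nonneg_left (hbern.trans hjensen) (sq_nonneg B)
  field_simp at key
  linarith

lemma one_sub_rpow_add_rpow_mul_log_pos {p r : ℝ} (hp : p ≠ 0) (hr : 0 ≤ r) (hr1 : r ≠ 1) :
    0 < 1 - r ^ p + r ^ p * Real.log (r ^ p) := by
  have : r ^ p ≠ 1 := by rwa [Ne, ← Real.one_rpow p, Real.rpow_left_inj hr zero_le_one hp]
  linarith [Real.self_sub_one_lt_mul_log (Real.rpow_nonneg hr p) this]

lemma apply_mul_add_mul_of_mul_eq_zero (F : ℝ → ℝ) (hF : F 0 = 0) {v w : ℝ} (hvw : v * w = 0)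
    (s t : ℝ) : F (s * v + t * w) = F (s * v) + F (t * w) := by
  rcases mul_eq_zero.1 hvw with rfl | rfl <;> simp [hF]

lemma apply_add_mul_of_mul_eq_zero (G : ℝ → ℝ) {v w : ℝ} (hvw : v * w = 0) :
    G (v + w) * v = G v * v := by
  rcases mul_eq_zero.1 hvw with rfl | rfl <;> simp

namespace DiscreteKirchhoff

lemma kirchhoff_term_le {b p dv dw dvw s t : ℝ} (hb : 0 ≤ b) (hp : 4 ≤ p) (hdv : 0 ≤ dv)
    (hdw : 0 ≤ dw) (hdvw : 0 ≤ dvw) (hs : 0 ≤ s) (ht : 0 ≤ t) :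
    b / 4 * ((s ^ 2 * dv + 2 * s * t * dvw + t ^ 2 * dw) ^ 2 - (dv + 2 * dvw + dw) ^ 2)
      ≤ b / p * (dv + 2 * dvw + dw) * ((dv + dvw) * (s ^ p - 1) + (dw + dvw) * (t ^ p - 1)) := by
  have hQX : s ^ 2 * dv + 2 * s * t * dvw + t ^ 2 * dw
      ≤ (dv + dvw) * s ^ 2 + (dw + dvw) * t ^ 2 := by
    nlinarith [mul_nonneg hdvw (sq_nonneg (s - t))]
  calc b / 4 * ((s ^ 2 * dv + 2 * s * t * dvw + t ^ 2 * dw) ^ 2 - (dv + 2 * dvw + dw) ^ 2)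
      ≤ b / 4 * (((dv + dvw) * s ^ 2 + (dw + dvw) * t ^ 2) ^ 2 - (dv + 2 * dvw + dw) ^ 2) := by
        gcongr
    _ = b / p * (p / 4 * (((dv + dvw) * s ^ 2 + (dw + dvw) * t ^ 2) ^ 2
          - ((dv + dvw) + (dw + dvw)) ^ 2)) := by
        field_simp; ring
    _ ≤ b / p * (((dv + dvw) + (dw + dvw)) * ((dv + dvw) * s ^ p + (dw + dvw) * t ^ p
          - ((dv + dvw) + (dw + dvw)))) :=
        mul_le_mul_of_nonneg_left (sq_sub_sq_le_mul_weighted_rpow hp (add_nonneg hdv hdvw)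
          (add_nonneg hdw hdvw) hs ht) (by positivity)
    _ = _ := by ring

-- The numbers through which `(s, t) ↦ J_λ(s v + t w)` depends on `(s, t)` when `v * w = 0`;
-- see `fiberData` and `Jlam_mul_add_mul`.
structure FiberData where
  nv : ℝ
  nw : ℝ
  dv : ℝ
  dw : ℝ
  dvw : ℝ
  pv : ℝ
  pw : ℝ
  lv : ℝ
  lw : ℝ

namespace FiberData

def swap (D : FiberData) : FiberData :=
  ⟨D.nw, D.nv, D.dw, D.dv, D.dvw, D.pw, D.pv, D.lw, D.lv⟩

noncomputable def energy (D : FiberData) (a b p s t : ℝ) : ℝ :=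
  1 / 2 * (s ^ 2 * D.nv + t ^ 2 * D.nw + 2 * s * t * a * D.dvw)
    + b / 4 * (s ^ 2 * D.dv + 2 * s * t * D.dvw + t ^ 2 * D.dw) ^ 2
    + 2 / p ^ 2 * (s ^ p * D.pv + t ^ p * D.pw)
    - 1 / p * (s ^ p * (D.lv + Real.log (s ^ 2) * D.pv) + t ^ p * (D.lw + Real.log (t ^ 2) * D.pw))

def nehari (D : FiberData) (a b : ℝ) : ℝ :=
  D.nv + a * D.dvw + b * (D.dv + 2 * D.dvw + D.dw) * (D.dv + D.dvw) - D.lv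

theorem energy_lt_energy_one_one (D : FiberData) {a b p s t : ℝ} (ha : 0 ≤ a) (hb : 0 ≤ b)
    (hp : 4 ≤ p) (hnv : 0 ≤ D.nv) (hnw : 0 ≤ D.nw) (hdv : 0 ≤ D.dv) (hdw : 0 ≤ D.dw)
    (hdvw : 0 ≤ D.dvw) (hpv : 0 < D.pv) (hpw : 0 < D.pw) (hv : D.nehari a b = 0)
    (hw : D.swap.nehari a b = 0) (hs : 0 < s) (ht : 0 < t) (hst : (s, t) ≠ (1, 1)) :
    D.energy a b p s t < D.energy a b p 1 1 := by
  have hp0 : 0 < p := by linarith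
  set ψs := 1 / 2 - 1 / p - (s ^ 2 / 2 - s ^ p / p)
  set ψt := 1 / 2 - 1 / p - (t ^ 2 / 2 - t ^ p / p)
  set φs := 1 - s ^ p + s ^ p * Real.log (s ^ p)
  set φt := 1 - t ^ p + t ^ p * Real.log (t ^ p)
  have key : D.energy a b p 1 1 - D.energy a b p s t
      = D.nv * ψs + D.nw * ψt + a * D.dvw * (ψs + ψt + (s - t) ^ 2 / 2)
        + (b / p * (D.dv + 2 * D.dvw + D.dw) * ((D.dv + D.dvw) * (s ^ p - 1)
            + (D.dw + D.dvw) * (t ^ p - 1))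
          - b / 4 * ((s ^ 2 * D.dv + 2 * s * t * D.dvw + t ^ 2 * D.dw) ^ 2
            - (D.dv + 2 * D.dvw + D.dw) ^ 2))
        + 2 / p ^ 2 * (D.pv * φs + D.pw * φt) := by
    -- The Nehari identities eliminate `lv` and `lw`; `8 * p` clears the denominators.
    simp only [energy, ψs, ψt, φs, φt, Real.log_pow, Real.log_rpow hs, Real.log_rpow ht,
      Real.one_rpow, one_pow, Real.log_one]
    simp only [nehari, swap] at hv hw
    field_simp
    linear_combination 8 * p * ((1 - s ^ p) * hv + (1 - t ^ p) * hw)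
  have hψs : 0 ≤ ψs := sub_nonneg.2 (sq_div_two_sub_rpow_div_le (by linarith) hs.le)
  have hψt : 0 ≤ ψt := sub_nonneg.2 (sq_div_two_sub_rpow_div_le (by linarith) ht.le)
  have hφs : 0 ≤ φs := by linarith [Real.self_sub_one_le_mul_log (Real.rpow_nonneg hs.le p)]
  have hφt : 0 ≤ φt := by linarith [Real.self_sub_one_le_mul_log (Real.rpow_nonneg ht.le p)]
  have hlog : 0 < D.pv * φs + D.pw * φt := by
    rcases not_and_or.1 (fun h => hst (Prod.ext h.1 h.2)) with hs1 | ht1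
    · exact add_pos_of_pos_of_nonneg
        (mul_pos hpv (one_sub_rpow_add_rpow_mul_log_pos hp0.ne' hs.le hs1)) (mul_nonneg hpw.le hφt)
    · exact add_pos_of_nonneg_of_pos (mul_nonneg hpv.le hφs)
        (mul_pos hpw (one_sub_rpow_add_rpow_mul_log_pos hp0.ne' ht.le ht1))
  have hquad : 0 ≤ D.nv * ψs + D.nw * ψt + a * D.dvw * (ψs + ψt + (s - t) ^ 2 / 2) := by
    positivity
  linarith [key, hquad, kirchhoff_term_le hb hp hdv hdw hdvw hs.le ht.le,
    mul_pos (by positivity : (0 : ℝ) < 2 / p ^ 2) hlog]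

end FiberData


lemma mem_Icc_of_adj {x y : V} (hxy : adj x y) : y ∈ Set.Icc (x - 1) (x + 1) := by
  have hle : ∀ i, |x i - y i| ≤ 1 := fun i => hxy ▸
    Finset.single_le_sum (f := fun j => |x j - y j|) (fun j _ => abs_nonneg _) (Finset.mem_univ i)
  constructor <;> intro i <;> have := abs_le.mp (hle i) <;>
    simp only [Pi.sub_apply, Pi.add_apply, Pi.one_apply] <;> omega

lemma summable_ite_adj (x : V) (f : V → ℝ) : Summable fun y => if adj x y then f y else 0 :=
  summable_of_hasFiniteSupport <| (Set.finite_Icc (x - 1) (x + 1)).subset fun y hy => by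
    by_contra hxy
    exact hy (if_neg fun h => hxy (mem_Icc_of_adj h))

lemma gradForm_comm (f g : V → ℝ) (x : V) : gradForm f g x = gradForm g f x := by
  simp only [gradForm, mul_comm (f _ - f x)]

lemma gradForm_mul_add_mul_left (c d : ℝ) (f g k : V → ℝ) (x : V) :
    gradForm (fun z => c * f z + d * g z) k x = c * gradForm f k x + d * gradForm g k x := by
  have hf := (summable_ite_adj x fun y => (f y - f x) * (k y - k x)).hasSum
  have hg := (summable_ite_adj x fun y => (g y - g x) * (k y - k x)).hasSum
  convert congrArg (1 / 2 * ·) ((hf.mul_left c).add (hg.mul_left d)).tsum_eq using 1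
  · exact congrArg (1 / 2 * ·) (tsum_congr fun y => by split_ifs <;> ring)
  · simp only [gradForm]; ring

lemma gradSq_mul_add_mul (c d : ℝ) (f g : V → ℝ) (x : V) :
    gradSq (fun z => c * f z + d * g z) x
      = c ^ 2 * gradSq f x + 2 * c * d * gradForm f g x + d ^ 2 * gradSq g x := by
  simp only [gradSq, gradForm_mul_add_mul_left, gradForm_comm _ (fun z => c * f z + d * g z),
    gradForm_comm g f]
  ring

lemma gradSq_nonneg (f : V → ℝ) (x : V) : 0 ≤ gradSq f x :=
  mul_nonneg (by norm_num) <| tsum_nonneg fun y => by split_ifs <;> nlinarith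

lemma gradForm_pos_neg_nonneg (u : V → ℝ) (x : V) : 0 ≤ gradForm (pos u) (neg u) x :=
  mul_nonneg (by norm_num) <| tsum_nonneg fun y => by
    split_ifs
    · exact ((Monotone.monovary (f := (max · 0)) (g := (min · 0))
        (fun _ _ h => max_le_max h le_rfl) (fun _ _ h => min_le_min h le_rfl)).sub_mul_sub_nonneg
        (u x) (u y))
    · exact le_rfl

lemma normHlamSq_nonneg {a lam : ℝ} {h : V → ℝ} (ha : 0 ≤ a) (hh : ∀ x, 0 ≤ hl lam h x)
    (u : V → ℝ) : 0 ≤ normHlamSq a lam h u :=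
  tsum_nonneg fun x => add_nonneg (mul_nonneg ha (gradSq_nonneg u x))
    (mul_nonneg (hh x) (sq_nonneg _))

lemma pos_add_neg (u : V → ℝ) (x : V) : pos u x + neg u x = u x := by
  rcases le_total (u x) 0 with hx | hx <;> simp [pos, neg, hx]

lemma pos_mul_neg (u : V → ℝ) (x : V) : pos u x * neg u x = 0 := by
  rcases le_total (u x) 0 with hx | hx <;> simp [pos, neg, hx]

lemma gradSq_eq_pos_add_neg (u : V → ℝ) (x : V) :
    gradSq u x = gradSq (pos u) x + 2 * gradForm (pos u) (neg u) x + gradSq (neg u) x := by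
  have hu : u = fun z => 1 * pos u z + 1 * neg u z := funext fun z => by simp [pos_add_neg]
  conv_lhs => rw [hu]
  rw [gradSq_mul_add_mul]; ring

lemma gradSq_pos_le (u : V → ℝ) (x : V) : gradSq (pos u) x ≤ gradSq u x := by
  linarith [gradSq_eq_pos_add_neg u x, gradForm_pos_neg_nonneg u x, gradSq_nonneg (neg u) x]

lemma gradSq_neg_le (u : V → ℝ) (x : V) : gradSq (neg u) x ≤ gradSq u x := by
  linarith [gradSq_eq_pos_add_neg u x, gradForm_pos_neg_nonneg u x, gradSq_nonneg (pos u) x]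

lemma pos_sq_le (u : V → ℝ) (x : V) : pos u x ^ 2 ≤ u x ^ 2 := by
  rw [← pos_add_neg u x]; nlinarith [pos_mul_neg u x, sq_nonneg (neg u x)]

lemma neg_sq_le (u : V → ℝ) (x : V) : neg u x ^ 2 ≤ u x ^ 2 := by
  rw [← pos_add_neg u x]; nlinarith [pos_mul_neg u x, sq_nonneg (pos u x)]

lemma logTerm_zero (p : ℝ) : logTerm p 0 = 0 := if_pos rfl

lemma nlTerm_mul_self (p t : ℝ) : nlTerm p t * t = logTerm p t := by
  rcases eq_or_ne t 0 with rfl | ht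
  · simp [nlTerm, logTerm]
  rw [nlTerm, logTerm, if_neg ht, if_neg ht, Real.rpow_sub (abs_pos.2 ht), Real.rpow_two, sq_abs]
  field_simp

lemma logTerm_mul {p c : ℝ} (hp : p ≠ 0) (hc : 0 < c) (v : ℝ) :
    logTerm p (c * v) = c ^ p * (logTerm p v + Real.log (c ^ 2) * |v| ^ p) := by
  rcases eq_or_ne v 0 with rfl | hv
  · simp [logTerm, Real.zero_rpow hp]
  rw [logTerm, logTerm, if_neg (mul_ne_zero hc.ne' hv), if_neg hv, mul_pow,
    Real.log_mul (by positivity) (by positivity), abs_mul, abs_of_pos hc,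
    Real.mul_rpow hc.le (abs_nonneg v)]
  ring

lemma abs_logTerm_le (p t : ℝ) : |logTerm p t| ≤ 2 * (|t| ^ (p + 1) + |t| ^ (p - 1)) := by
  rcases eq_or_ne t 0 with rfl | ht
  · simp only [logTerm, if_pos, abs_zero]; positivity
  have ht' : 0 < |t| := abs_pos.2 ht
  calc |logTerm p t| = |t| ^ p * (2 * |Real.log (|t|)|) := by
        rw [logTerm, if_neg ht, abs_mul, abs_of_nonneg (by positivity), Real.log_pow,
          Real.log_abs, abs_mul]; norm_num
    _ ≤ |t| ^ p * (2 * (|t| + |t|⁻¹)) := by gcongr; exact abs_log_le_add_inv ht'.le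
    _ = 2 * (|t| ^ (p + 1) + |t| ^ (p - 1)) := by
        rw [Real.rpow_add ht', Real.rpow_sub ht', Real.rpow_one]; ring

lemma summable_logTerm_of_sq {ι : Type*} {f : ι → ℝ} {p : ℝ} (hf : Summable fun i => f i ^ 2)
    (hp : 3 ≤ p) : Summable fun i => logTerm p (f i) :=
  Summable.of_norm_bounded (((hf.abs_rpow_of_sq (by linarith)).add
      (hf.abs_rpow_of_sq (by linarith))).mul_left 2) fun i => abs_logTerm_le p (f i)

structure EnergySummable (p lam : ℝ) (h v : V → ℝ) : Prop where
  summable_gradSq : Summable (gradSq v)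
  summable_weightedSq : Summable fun x => hl lam h x * v x ^ 2
  summable_rpow : Summable fun x => |v x| ^ p
  summable_logTerm : Summable fun x => logTerm p (v x)

lemma EnergySummable.of_memH {p lam : ℝ} {h u v : V → ℝ} (hu : memH h u) (hh : ∀ x, 0 ≤ h x)
    (hp : 3 ≤ p) (hgrad : ∀ x, gradSq v x ≤ gradSq u x) (hsq : ∀ x, v x ^ 2 ≤ u x ^ 2) :
    EnergySummable p lam h v := by
  have hu_sq : Summable fun x => u x ^ 2 :=
    hu.1.of_nonneg_of_le (fun x => sq_nonneg _) fun x => le_add_of_nonneg_left (gradSq_nonneg u x)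
  have hv_sq : Summable fun x => v x ^ 2 := hu_sq.of_nonneg_of_le (fun x => sq_nonneg _) hsq
  have hv_hsq : Summable fun x => h x * v x ^ 2 :=
    hu.2.of_nonneg_of_le (fun x => mul_nonneg (hh x) (sq_nonneg _))
      fun x => mul_le_mul_of_nonneg_left (hsq x) (hh x)
  refine ⟨?_, ?_, hv_sq.abs_rpow_of_sq (by linarith), summable_logTerm_of_sq hv_sq hp⟩
  · exact (hu.1.of_nonneg_of_le (fun x => gradSq_nonneg u x)
      fun x => le_add_of_nonneg_right (sq_nonneg _)).of_nonneg_of_le (gradSq_nonneg v) hgrad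
  · exact ((hv_hsq.mul_left lam).add hv_sq).congr fun x => by simp only [hl]; ring

lemma summable_gradForm_pos_neg {h u : V → ℝ} (hu : memH h u) :
    Summable (gradForm (pos u) (neg u)) :=
  hu.1.of_nonneg_of_le (gradForm_pos_neg_nonneg u) fun x => by
    linarith [gradSq_eq_pos_add_neg u x, gradForm_pos_neg_nonneg u x, gradSq_nonneg (pos u) x,
      gradSq_nonneg (neg u) x, sq_nonneg (u x)]

noncomputable def fiberData (a p lam : ℝ) (h v w : V → ℝ) : FiberData where
  nv := normHlamSq a lam h v
  nw := normHlamSq a lam h w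
  dv := ∑' x, gradSq v x
  dw := ∑' x, gradSq w x
  dvw := ∑' x, gradForm v w x
  pv := ∑' x, |v x| ^ p
  pw := ∑' x, |w x| ^ p
  lv := ∑' x, logTerm p (v x)
  lw := ∑' x, logTerm p (w x)

lemma fiberData_swap (a p lam : ℝ) (h v w : V → ℝ) :
    fiberData a p lam h w v = (fiberData a p lam h v w).swap := by
  simp only [fiberData, FiberData.swap, gradForm_comm w v]

section Fiber

variable {p lam : ℝ} {h v w : V → ℝ}

lemma hasSum_gradSq_mul_add_mul (hv : EnergySummable p lam h v)
    (hw : EnergySummable p lam h w) (hvw : Summable (gradForm v w)) (s t : ℝ) :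
    HasSum (gradSq fun x => s * v x + t * w x)
      (s ^ 2 * ∑' x, gradSq v x + 2 * s * t * ∑' x, gradForm v w x + t ^ 2 * ∑' x, gradSq w x) :=
  (((hv.summable_gradSq.hasSum.mul_left (s ^ 2)).add (hvw.hasSum.mul_left (2 * s * t))).add
    (hw.summable_gradSq.hasSum.mul_left (t ^ 2))).congr_fun (gradSq_mul_add_mul s t v w)

theorem Jlam_mul_add_mul (a b : ℝ) (hv : EnergySummable p lam h v)
    (hw : EnergySummable p lam h w) (hvw : Summable (gradForm v w)) (hdisj : ∀ x, v x * w x = 0)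
    (hp : p ≠ 0) {s t : ℝ} (hs : 0 < s) (ht : 0 < t) :
    Jlam a b p lam h (fun x => s * v x + t * w x)
      = (fiberData a p lam h v w).energy a b p s t := by
  set D := fiberData a p lam h v w
  have hsq : ∀ x, (s * v x + t * w x) ^ 2 = s ^ 2 * v x ^ 2 + t ^ 2 * w x ^ 2 := fun x => by
    linear_combination 2 * s * t * hdisj x
  have hnorm : normHlamSq a lam h (fun x => s * v x + t * w x)
      = s ^ 2 * D.nv + t ^ 2 * D.nw + 2 * s * t * a * D.dvw :=
    (tsum_congr fun x => by simp only [gradSq_mul_add_mul, hsq]; ring).trans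
      (((((hv.summable_gradSq.mul_left a).add hv.summable_weightedSq).hasSum.mul_left (s ^ 2)).add
        (((hw.summable_gradSq.mul_left a).add hw.summable_weightedSq).hasSum.mul_left
          (t ^ 2))).add (hvw.hasSum.mul_left (2 * s * t * a))).tsum_eq
  have hrpow : ∑' x, |s * v x + t * w x| ^ p = s ^ p * D.pv + t ^ p * D.pw :=
    (tsum_congr fun x => by
      rw [apply_mul_add_mul_of_mul_eq_zero (|·| ^ p) (by simp [Real.zero_rpow hp]) (hdisj x),
        abs_mul, abs_mul, abs_of_pos hs, abs_of_pos ht, Real.mul_rpow hs.le (abs_nonneg _),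
        Real.mul_rpow ht.le (abs_nonneg _)]).trans
      ((hv.summable_rpow.hasSum.mul_left (s ^ p)).add
        (hw.summable_rpow.hasSum.mul_left (t ^ p))).tsum_eq
  have hlog : ∑' x, logTerm p (s * v x + t * w x)
      = s ^ p * (D.lv + Real.log (s ^ 2) * D.pv) + t ^ p * (D.lw + Real.log (t ^ 2) * D.pw) :=
    (tsum_congr fun x => by
      rw [apply_mul_add_mul_of_mul_eq_zero _ (logTerm_zero p) (hdisj x), logTerm_mul hp hs,
        logTerm_mul hp ht]).trans
      (((hv.summable_logTerm.hasSum.add (hv.summable_rpow.hasSum.mul_left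
        (Real.log (s ^ 2)))).mul_left (s ^ p)).add ((hw.summable_logTerm.hasSum.add
        (hw.summable_rpow.hasSum.mul_left (Real.log (t ^ 2)))).mul_left (t ^ p))).tsum_eq
  rw [Jlam, hnorm, (hasSum_gradSq_mul_add_mul hv hw hvw s t).tsum_eq, hrpow, hlog]
  rfl

theorem Jp_eq_nehari (a b : ℝ) (hv : EnergySummable p lam h v)
    (hw : EnergySummable p lam h w) (hvw : Summable (gradForm v w)) (hdisj : ∀ x, v x * w x = 0)
    {u : V → ℝ} (hu : ∀ x, v x + w x = u x) :
    Jp a b p lam h u v = (fiberData a p lam h v w).nehari a b := by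
  obtain rfl : u = fun x => v x + w x := funext fun x => (hu x).symm
  set D := fiberData a p lam h v w
  have hgrad : ∑' x, gradSq (fun x => v x + w x) x
      = ∑' x, gradSq v x + 2 * ∑' x, gradForm v w x + ∑' x, gradSq w x := by
    simpa only [one_pow, one_mul, mul_one] using (hasSum_gradSq_mul_add_mul hv hw hvw 1 1).tsum_eq
  have hform : ∀ x, gradForm (fun x => v x + w x) v x = gradSq v x + gradForm v w x := fun x => by
    simpa [gradSq, gradForm_comm w v] using gradForm_mul_add_mul_left 1 1 v w v x
  have hquad : ∑' x, (a * gradForm (fun x => v x + w x) v x + hl lam h x * (v x + w x) * v x)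
      = D.nv + a * D.dvw :=
    (tsum_congr fun x => by
      rw [hform]; linear_combination hl lam h x * hdisj x).trans
      (((hv.summable_gradSq.mul_left a).add hv.summable_weightedSq).hasSum.add
        (hvw.hasSum.mul_left a)).tsum_eq
  have hlin : ∑' x, gradForm (fun x => v x + w x) v x = D.dv + D.dvw :=
    (tsum_congr hform).trans (hv.summable_gradSq.hasSum.add hvw.hasSum).tsum_eq
  have hlog : ∑' x, nlTerm p (v x + w x) * v x = D.lv := tsum_congr fun x => by
    rw [apply_add_mul_of_mul_eq_zero (nlTerm p) (hdisj x), nlTerm_mul_self]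
  simp only [Jp]
  rw [hquad, hgrad, hlin, hlog]
  rfl

theorem Jp_eq_nehari_swap (a b : ℝ) (hv : EnergySummable p lam h v)
    (hw : EnergySummable p lam h w) (hvw : Summable (gradForm v w)) (hdisj : ∀ x, v x * w x = 0)
    {u : V → ℝ} (hu : ∀ x, v x + w x = u x) :
    Jp a b p lam h u w = (fiberData a p lam h v w).swap.nehari a b := by
  rw [← fiberData_swap]
  refine Jp_eq_nehari a b hw hv ?_ (fun x => by rw [mul_comm, hdisj]) fun x => by rw [add_comm, hu]
  rwa [show gradForm w v = gradForm v w from funext (gradForm_comm w v)]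

end Fiber

/-- strict maximality of u over su⁺ + tu⁻ on M_λ. -/
theorem stmt10 (a b p lam : ℝ) (ha : 0 < a) (hb : 0 < b) (hp : 6 < p) (hlam : 0 < lam)
    (h : V → ℝ) (hh : ∀ x, 0 ≤ h x) (u : V → ℝ) (hu : u ∈ MSet a b p lam h)
    (s t : ℝ) (hs : 0 < s) (ht : 0 < t) (hst : (s, t) ≠ (1, 1)) :
    Jlam a b p lam h (fun x => s * pos u x + t * neg u x) < Jlam a b p lam h u := by
  obtain ⟨hmem, hu_pos, hu_neg, hJp_pos, hJp_neg⟩ := hu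
  have hp3 : (3 : ℝ) ≤ p := by linarith
  have hhl : ∀ x, 0 ≤ hl lam h x := fun x => by
    have := mul_nonneg hlam.le (hh x); simp only [hl]; linarith
  have hS₁ := EnergySummable.of_memH (lam := lam) hmem hh hp3 (gradSq_pos_le u) (pos_sq_le u)
  have hS₂ := EnergySummable.of_memH (lam := lam) hmem hh hp3 (gradSq_neg_le u) (neg_sq_le u)
  have hS₁₂ := summable_gradForm_pos_neg hmem
  have hJ := fun {s t : ℝ} (hs : 0 < s) (ht : 0 < t) =>
    Jlam_mul_add_mul a b hS₁ hS₂ hS₁₂ (pos_mul_neg u) (by linarith) hs ht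
  have hJu : Jlam a b p lam h u = (fiberData a p lam h (pos u) (neg u)).energy a b p 1 1 := by
    convert hJ one_pos one_pos using 2
    exact funext fun x => by simp [pos_add_neg]
  rw [hJ hs ht, hJu]
  rw [Jp_eq_nehari a b hS₁ hS₂ hS₁₂ (pos_mul_neg u) (pos_add_neg u)] at hJp_pos
  rw [Jp_eq_nehari_swap a b hS₁ hS₂ hS₁₂ (pos_mul_neg u) (pos_add_neg u)] at hJp_neg
  exact FiberData.energy_lt_energy_one_one _ ha.le hb.le (by linarith)
    (normHlamSq_nonneg ha.le hhl _) (normHlamSq_nonneg ha.le hhl _)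
    (tsum_nonneg (gradSq_nonneg _)) (tsum_nonneg (gradSq_nonneg _))
    (tsum_nonneg (gradForm_pos_neg_nonneg u)) (tsum_abs_rpow_pos hS₁.summable_rpow hu_pos)
    (tsum_abs_rpow_pos hS₂.summable_rpow hu_neg) hJp_pos hJp_neg hs ht hst

end DiscreteKirchhoff
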